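/- arXiv:2104.03568 — 3 statements merged into one kernel-verified Lean document; each statement's English description precedes it below -/
import Mathlib

section
/- Let $P$ be a bistochastic matrix on a finite state space $\Omega$ with $|\Omega| = n$, let $x \in \Omega$, and let $t \ge 1$. For a permutation $\pi$ of $\Omega$, let $\mu_{\pi}$ denote the law on $(\Omega\times\Omega)^t$ of the trajectory $((X_0, Y_0), (X_1, Y_1), \ldots, (X_{t-1}, Y_{t-1}))$ where $X_0 = x$, and for each $k \ge 0$, $Y_k$ is drawn from $P(X_k, \cdot)$ and $X_{k+1} = \pi(Y_k)$; let $\mu$ be the annealed law, i.e. the average of $\mu_{\pi}$ over a uniformly random permutation $\pi$. Let $\nu$ be the law on $(\Omega\times\Omega)^t$ of $((X_0^\star, Y_0^\star), \ldots, (X_{t-1}^\star, Y_{t-1}^\star))$ where $X_0^\star = x$, each $Y_k^\star$ is drawn from $P(X_k^\star, \cdot)$, and each $X_{k+1}^\star$ is uniform on $\Omega$ independently of everything else. Then the total-variation distance between $\mu$ and $\nu$ is at most $2t^2/n$. -/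
open Finset Filter

noncomputable section

/-- A bistochastic matrix: nonnegative entries, all rows and columns sum to 1. -/
def Bistochastic {n : ℕ} (P : Matrix (Fin n) (Fin n) ℝ) : Prop :=
  (∀ x y, 0 ≤ P x y) ∧ (∀ x, ∑ y, P x y = 1) ∧ (∀ y, ∑ x, P x y = 1)

/-- The permutation matrix of a permutation: `Π x y = 1` iff `y = π x`. -/
def permMatrix {n : ℕ} (π : Equiv.Perm (Fin n)) : Matrix (Fin n) (Fin n) ℝ :=
  fun x y => if y = π x then 1 else 0

/-- Entropy rate of a bistochastic matrix. -/
def entRate {n : ℕ} (P : Matrix (Fin n) (Fin n) ℝ) : ℝ :=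
  (1 / n) * ∑ x, ∑ y, if 0 < P x y then P x y * Real.log (1 / P x y) else 0

/-- Minimal positive entry. -/
def minPosEntry {n : ℕ} (P : Matrix (Fin n) (Fin n) ℝ) : ℝ :=
  sInf {r : ℝ | 0 < r ∧ ∃ x y, P x y = r}

/-- Total variation distance to uniform at time `t` from `x`. -/
def tvFrom {n : ℕ} (Q : Matrix (Fin n) (Fin n) ℝ) (t : ℕ) (x : Fin n) : ℝ :=
  ∑ y, max ((1 : ℝ) / n - (Q ^ t) x y) 0

/-- Worst-case total variation distance at time `t`. -/
def worstTV {n : ℕ} (Q : Matrix (Fin n) (Fin n) ℝ) (t : ℕ) : ℝ :=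
  ⨆ x, tvFrom Q t x

/-- Mixing time. -/
def mixingTime {n : ℕ} (Q : Matrix (Fin n) (Fin n) ℝ) (ε : ℝ) : ℕ :=
  sInf {t : ℕ | worstTV Q t ≤ ε}

open Classical in
/-- Probability of an event under the uniform distribution on permutations. -/
def probPerm {n : ℕ} (E : Equiv.Perm (Fin n) → Prop) : ℝ :=
  (Finset.univ.filter E).card / (Fintype.card (Equiv.Perm (Fin n)))


open Classical in
/-- Law of the trajectory `((X₀,Y₀),…,(X_{t-1},Y_{t-1}))` for a fixed permutation `π`:
`X₀ = x`, `Yₖ ~ P(Xₖ,·)`, `X_{k+1} = π(Yₖ)`. -/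
def quenchedLaw {n : ℕ} (t : ℕ) (ht : 1 ≤ t) (P : Matrix (Fin n) (Fin n) ℝ) (x : Fin n)
    (π : Equiv.Perm (Fin n)) (w : Fin t → Fin n × Fin n) : ℝ :=
  if (w ⟨0, ht⟩).1 = x ∧
      ∀ (k : ℕ) (h : k + 1 < t), (w ⟨k + 1, h⟩).1 = π (w ⟨k, Nat.lt_of_succ_lt h⟩).2
  then ∏ k, P (w k).1 (w k).2 else 0

/-- The annealed law: average of the quenched laws over a uniformly random permutation. -/
def annealedLaw {n : ℕ} (t : ℕ) (ht : 1 ≤ t) (P : Matrix (Fin n) (Fin n) ℝ) (x : Fin n)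
    (w : Fin t → Fin n × Fin n) : ℝ :=
  (∑ π : Equiv.Perm (Fin n), quenchedLaw t ht P x π w) / (Fintype.card (Equiv.Perm (Fin n)))

open Classical in
/-- Law of `((X₀⋆,Y₀⋆),…,(X⋆_{t-1},Y⋆_{t-1}))`: `X₀⋆ = x`, `Yₖ⋆ ~ P(Xₖ⋆,·)`, and each
`X⋆_{k+1}` uniform on `Ω`, independently of everything else. -/
def starLaw {n : ℕ} (t : ℕ) (ht : 1 ≤ t) (P : Matrix (Fin n) (Fin n) ℝ) (x : Fin n)
    (w : Fin t → Fin n × Fin n) : ℝ :=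
  if (w ⟨0, ht⟩).1 = x then (∏ k, P (w k).1 (w k).2) * ((1 : ℝ) / n) ^ (t - 1) else 0

/-!
Call a trajectory `w` good if `X₀ = x` and both `X₀, …, X_{t-1}` and `Y₀, …, Y_{t-1}` are
pairwise distinct. For a good `w` the constraints `π(Yₖ) = X_{k+1}` prescribe `π` on `t - 1`
points, which leaves at least `(n - t + 1)!` permutations, so `μ w ≥ ∏ P · (n - t + 1)!/n! ≥
∏ P / n^{t-1} = ν w`. Hence the total variation `∑ (ν - μ)⁺` is at most the `ν`-expected number
of collisions `Xⱼ = Xₖ` or `Yⱼ = Yₖ` with `j < k`. Under `ν` the coordinate `k ≥ 1` is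
independent of the others and both its components are uniform (the `Y`-component because the
columns of `P` sum to `1`), so each of the fewer than `t²` pairs collides with probability `1/n`.
-/

theorem half_sum_abs_sub_eq_sum_max_sub {ι : Type*} [Fintype ι] (μ ν : ι → ℝ)
    (h : ∑ i, μ i = ∑ i, ν i) :
    (1 / 2 : ℝ) * ∑ i, |μ i - ν i| = ∑ i, max (ν i - μ i) 0 := by
  have habs : ∀ i, |μ i - ν i| = (μ i - ν i) + 2 * max (ν i - μ i) 0 := fun i => by
    rcases le_total (ν i) (μ i) with hle | hle
    · rw [abs_of_nonneg (sub_nonneg.2 hle), max_eq_right (by linarith)]; ring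
    · rw [abs_of_nonpos (sub_nonpos.2 hle), max_eq_left (by linarith)]; ring
  simp only [habs, sum_add_distrib, sum_sub_distrib, h, ← mul_sum]
  ring

theorem sum_mul_prod_chain_eq_one {β : Type*} [Fintype β] (K : β → β → ℝ)
    (hK : ∀ z, ∑ z', K z z' = 1) :
    ∀ (s : ℕ) (F₀ : β → ℝ), ∑ z, F₀ z = 1 →
      ∑ w : Fin (s + 1) → β, F₀ (w 0) * ∏ j : Fin s, K (w j.castSucc) (w j.succ) = 1
  | 0, F₀, h₀ => by
    simpa using ((Equiv.funUnique (Fin 1) β).sum_comp F₀).trans h₀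
  | s + 1, F₀, h₀ => by
    rw [← (Fin.consEquiv fun _ => β).sum_comp, Fintype.sum_prod_type]
    simp only [Fin.consEquiv_apply, Fin.cons_zero, Fin.prod_univ_succ, Fin.castSucc_zero,
      Fin.cons_succ, ← Fin.succ_castSucc, ← mul_sum, sum_mul_prod_chain_eq_one K hK s _ (hK _),
      mul_one, h₀]

theorem sum_ite_eq_mul_prod {α β : Type*} [Fintype α] [DecidableEq β] {s : ℕ}
    (F : Fin (s + 1) → α → ℝ) (hF : ∀ m, ∑ a, F m a = 1) {j k : Fin (s + 1)} (hjk : j ≠ k)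
    (h : α → β) (c : ℝ) (hc : ∀ b, ∑ a, (if b = h a then 1 else 0) * F k a = c) :
    ∑ u : Fin (s + 1) → α, (if h (u j) = h (u k) then 1 else 0) * ∏ m, F m (u m) = c := by
  obtain ⟨j, rfl⟩ := Fin.exists_succAbove_eq hjk
  rw [← (Fin.insertNthEquiv (fun _ => α) k).sum_comp, Fintype.sum_prod_type_right]
  simp only [Fin.insertNthEquiv_apply, Fin.insertNth_apply_same, Fin.insertNth_apply_succAbove,
    Fin.prod_univ_succAbove _ k, ← mul_assoc, ← sum_mul, hc, ← mul_sum, ← Fintype.prod_sum,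
    hF, prod_const_one, mul_one]

theorem factorial_sub_le_card_perm_extending {α : Type*} [Fintype α] [DecidableEq α] {s : ℕ}
    {f g : Fin s → α} (hf : Function.Injective f) (hg : Function.Injective g) :
    (Fintype.card α - s).factorial ≤ #{π : Equiv.Perm α | ∀ j, π (f j) = g j} := by
  set σ : Equiv.Perm α :=
    ((Equiv.ofInjective f hf).symm.trans (Equiv.ofInjective g hg)).extendSubtype
  have hσ : ∀ j, σ (f j) = g j := fun j => by
    simp [σ, Equiv.extendSubtype_apply_of_mem _ _ (Set.mem_range_self j)]
  calc (Fintype.card α - s).factorial = Fintype.card (Equiv.Perm {a // a ∉ Set.range f}) := by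
        rw [Fintype.card_perm, Fintype.card_subtype_compl, Set.card_range_of_injective hf,
          Fintype.card_fin]
    _ = #(univ : Finset (Equiv.Perm {a // a ∉ Set.range f})) := card_univ.symm
    _ ≤ _ := by
        refine card_le_card_of_injOn (fun τ => σ * Equiv.Perm.ofSubtype τ) (fun τ _ => ?_) ?_
        · simp [Equiv.Perm.ofSubtype_apply_of_not_mem, hσ]
        · exact ((mul_right_injective σ).comp Equiv.Perm.ofSubtype_injective).injOn

def increasingPairs (t : ℕ) : Finset (Fin t × Fin t) := {p | p.1 < p.2}

theorem card_increasingPairs_le (t : ℕ) : #(increasingPairs t) ≤ t ^ 2 :=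
  (card_filter_le _ _).trans (by simp [sq])

section Collisions

variable {β : Type*} [DecidableEq β] {t : ℕ}

def collisionCount (f : Fin t → β) : ℝ :=
  ∑ p ∈ increasingPairs t, if f p.1 = f p.2 then 1 else 0

theorem collisionCount_nonneg (f : Fin t → β) : 0 ≤ collisionCount f :=
  sum_nonneg fun _ _ => by positivity

theorem one_le_collisionCount {f : Fin t → β} (hf : ¬Function.Injective f) :
    1 ≤ collisionCount f := by
  obtain ⟨a, b, hab, hne⟩ := Function.not_injective_iff.1 hf
  wlog hlt : a < b generalizing a b
  · exact this b a hab.symm hne.symm (hne.lt_or_gt.resolve_left hlt)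
  calc (1 : ℝ) = if f (a, b).1 = f (a, b).2 then 1 else 0 := by simp [hab]
    _ ≤ collisionCount f :=
      single_le_sum (f := fun p : Fin t × Fin t => if f p.1 = f p.2 then (1 : ℝ) else 0)
        (fun _ _ => by positivity) (by simp [increasingPairs, hlt])

theorem sum_collisionCount_mul_prod {α : Type*} [Fintype α] {s : ℕ} (F : Fin (s + 1) → α → ℝ)
    (hF : ∀ m, ∑ a, F m a = 1) (h : α → β) (c : ℝ)
    (hc : ∀ k ≠ 0, ∀ b, ∑ a, (if b = h a then 1 else 0) * F k a = c) :
    ∑ u : Fin (s + 1) → α, collisionCount (fun k => h (u k)) * ∏ m, F m (u m) =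
      #(increasingPairs (s + 1)) * c := by
  simp only [collisionCount, sum_mul]
  rw [sum_comm, ← nsmul_eq_mul, ← sum_const]
  refine sum_congr rfl fun p hp => ?_
  have hlt : p.1 < p.2 := (mem_filter.1 hp).2
  exact sum_ite_eq_mul_prod F hF hlt.ne h c (hc _ (Fin.ne_zero_of_lt hlt))

end Collisions

section Trajectories

variable {n s : ℕ} (P : Matrix (Fin n) (Fin n) ℝ) (x : Fin n)

def startWeight (z : Fin n × Fin n) : ℝ :=
  if z.1 = x then P z.1 z.2 else 0

def quenchedKernel (π : Equiv.Perm (Fin n)) (z z' : Fin n × Fin n) : ℝ :=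
  if z'.1 = π z.2 then P z'.1 z'.2 else 0

def starWeight (k : Fin (s + 1)) (z : Fin n × Fin n) : ℝ :=
  if k = 0 then startWeight P x z else P z.1 z.2 / n

variable {P x}

open Classical in
theorem quenchedLaw_eq_ite (ht : 1 ≤ s + 1) (π : Equiv.Perm (Fin n))
    (w : Fin (s + 1) → Fin n × Fin n) :
    quenchedLaw (s + 1) ht P x π w =
      if (w 0).1 = x ∧ ∀ j : Fin s, (w j.succ).1 = π (w j.castSucc).2
      then ∏ k, P (w k).1 (w k).2 else 0 :=
  if_congr (and_congr Iff.rfl ⟨fun h j => h j j.succ.isLt, fun h k hk => h ⟨k, by omega⟩⟩)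
    rfl rfl

theorem quenchedLaw_eq_chain (ht : 1 ≤ s + 1) (π : Equiv.Perm (Fin n))
    (w : Fin (s + 1) → Fin n × Fin n) :
    quenchedLaw (s + 1) ht P x π w =
      startWeight P x (w 0) * ∏ j : Fin s, quenchedKernel P π (w j.castSucc) (w j.succ) := by
  simp only [quenchedLaw_eq_ite, startWeight, quenchedKernel, Fintype.prod_ite_zero,
    Fin.prod_univ_succ]
  split_ifs <;> simp_all

theorem starLaw_eq_prod (ht : 1 ≤ s + 1) (w : Fin (s + 1) → Fin n × Fin n) :
    starLaw (s + 1) ht P x w = ∏ k, starWeight P x k (w k) := by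
  simp only [starLaw, starWeight, startWeight, Fin.prod_univ_succ, Fin.succ_ne_zero, if_false,
    div_eq_mul_one_div (P _ _), prod_mul_distrib, prod_const, card_univ, Fintype.card_fin,
    Nat.add_sub_cancel, if_true]
  split_ifs <;> simp_all [mul_assoc]

theorem sum_ite_snd_eq_mul_starWeight (hcol : ∀ b, ∑ a, P a b = 1) {k : Fin (s + 1)}
    (hk : k ≠ 0) (b : Fin n) : ∑ z, (if b = z.2 then 1 else 0) * starWeight P x k z = 1 / n := by
  simp [starWeight, hk, Fintype.sum_prod_type, ← sum_div, hcol]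

variable (hrow : ∀ a, ∑ b, P a b = 1)
include hrow

theorem sum_annealedLaw (ht : 1 ≤ s + 1) : ∑ w, annealedLaw (s + 1) ht P x w = 1 := by
  have hquenched (π : Equiv.Perm (Fin n)) : ∑ w, quenchedLaw (s + 1) ht P x π w = 1 := by
    simp only [quenchedLaw_eq_chain]
    refine sum_mul_prod_chain_eq_one _ (fun z => ?_) s _ ?_
    · simp [quenchedKernel, Fintype.sum_prod_type, hrow]
    · simp [startWeight, Fintype.sum_prod_type, hrow]
  simp only [annealedLaw, ← sum_div]
  rw [sum_comm]
  simp [hquenched]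

theorem sum_starWeight (k : Fin (s + 1)) : ∑ z, starWeight P x k z = 1 := by
  have hn : (n : ℝ) ≠ 0 := by exact_mod_cast x.pos.ne'
  by_cases hk : k = 0 <;>
    simp [starWeight, startWeight, hk, Fintype.sum_prod_type, hrow, ← sum_div, hn]

theorem sum_starLaw (ht : 1 ≤ s + 1) : ∑ w, starLaw (s + 1) ht P x w = 1 := by
  simp only [starLaw_eq_prod, ← Fintype.prod_sum, sum_starWeight hrow, prod_const_one]

theorem sum_ite_fst_eq_mul_starWeight {k : Fin (s + 1)} (hk : k ≠ 0) (b : Fin n) :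
    ∑ z, (if b = z.1 then 1 else 0) * starWeight P x k z = 1 / n := by
  simp [starWeight, hk, Fintype.sum_prod_type, ← sum_div, hrow]

end Trajectories

section Comparison

variable {n s : ℕ} {P : Matrix (Fin n) (Fin n) ℝ} {x : Fin n} (hP : ∀ a b, 0 ≤ P a b)
  (ht : 1 ≤ s + 1)
include hP

theorem starLaw_nonneg (w : Fin (s + 1) → Fin n × Fin n) : 0 ≤ starLaw (s + 1) ht P x w := by
  unfold starLaw
  split_ifs
  · exact mul_nonneg (prod_nonneg fun k _ => hP _ _) (by positivity)
  · exact le_rfl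

theorem annealedLaw_nonneg (w : Fin (s + 1) → Fin n × Fin n) :
    0 ≤ annealedLaw (s + 1) ht P x w := by
  refine div_nonneg (sum_nonneg fun π _ => ?_) (Nat.cast_nonneg _)
  unfold quenchedLaw
  split_ifs
  · exact prod_nonneg fun k _ => hP _ _
  · exact le_rfl

theorem starLaw_le_annealedLaw {w : Fin (s + 1) → Fin n × Fin n} (h₀ : (w 0).1 = x)
    (hX : Function.Injective fun k => (w k).1) (hY : Function.Injective fun k => (w k).2) :
    starLaw (s + 1) ht P x w ≤ annealedLaw (s + 1) ht P x w := by
  set f : Fin s → Fin n := fun j => (w j.castSucc).2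
  set g : Fin s → Fin n := fun j => (w j.succ).1
  have hf : Function.Injective f := hY.comp (Fin.castSucc_injective s)
  have hg : Function.Injective g := hX.comp (Fin.succ_injective s)
  set S : Finset (Equiv.Perm (Fin n)) := {π | ∀ j, π (f j) = g j}
  have hstar : starLaw (s + 1) ht P x w = (∏ k, P (w k).1 (w k).2) * (1 / n ^ s) := by
    rw [starLaw, if_pos (show (w ⟨0, ht⟩).1 = x from h₀), Nat.add_sub_cancel, one_div_pow]
  have hannealed :
      annealedLaw (s + 1) ht P x w = (∏ k, P (w k).1 (w k).2) * (#S / n.factorial) := by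
    simp only [annealedLaw, quenchedLaw_eq_ite, h₀, true_and, eq_comm (a := (w _).1), sum_ite,
      sum_const_zero, add_zero, sum_const, nsmul_eq_mul, Fintype.card_perm, Fintype.card_fin]
    ring
  have hcount : (n.factorial : ℝ) ≤ #S * (n : ℝ) ^ s := by
    have hext := factorial_sub_le_card_perm_extending hf hg
    rw [Fintype.card_fin] at hext
    have hsn : s ≤ n := by simpa using Fintype.card_le_of_injective f hf
    rw [← Nat.factorial_mul_descFactorial hsn]
    exact_mod_cast Nat.mul_le_mul hext (Nat.descFactorial_le_pow n s)
  rw [hstar, hannealed]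
  refine mul_le_mul_of_nonneg_left ?_ (prod_nonneg fun k _ => hP _ _)
  rw [div_le_div_iff₀ (pow_pos (Nat.cast_pos.2 x.pos) s) (Nat.cast_pos.2 n.factorial_pos)]
  linarith

theorem max_sub_le_collisionCount_mul_starLaw (w : Fin (s + 1) → Fin n × Fin n) :
    max (starLaw (s + 1) ht P x w - annealedLaw (s + 1) ht P x w) 0 ≤
      (collisionCount (fun k => (w k).1) + collisionCount (fun k => (w k).2)) *
        starLaw (s + 1) ht P x w := by
  have hν := starLaw_nonneg (x := x) hP ht w
  have hμ := annealedLaw_nonneg (x := x) hP ht w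
  have hX := collisionCount_nonneg fun k => (w k).1
  have hY := collisionCount_nonneg fun k => (w k).2
  refine max_le ?_ (mul_nonneg (add_nonneg hX hY) hν)
  by_cases h₀ : (w 0).1 = x
  · by_cases hinj : Function.Injective (fun k => (w k).1) ∧ Function.Injective (fun k => (w k).2)
    · nlinarith [starLaw_le_annealedLaw hP ht h₀ hinj.1 hinj.2]
    · have hone : 1 ≤ collisionCount (fun k => (w k).1) + collisionCount (fun k => (w k).2) :=
        (not_and_or.1 hinj).elim (fun h => by linarith [one_le_collisionCount h])
          (fun h => by linarith [one_le_collisionCount h])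
      nlinarith
  · have hzero : starLaw (s + 1) ht P x w = 0 := if_neg h₀
    rw [hzero, mul_zero]
    linarith

end Comparison

/-- coupling of Section 2.1: the total-variation distance between the
annealed law of the trajectory and the i.i.d. approximation is at most `2t²/n`. -/
theorem annealed_coupling
    (n t : ℕ) (ht : 1 ≤ t) (P : Matrix (Fin n) (Fin n) ℝ) (hbis : Bistochastic P)
    (x : Fin n) :
    (1 / 2 : ℝ) * ∑ w : Fin t → Fin n × Fin n,
        |annealedLaw t ht P x w - starLaw t ht P x w| ≤ 2 * (t : ℝ) ^ 2 / n := by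
  obtain ⟨hP, hrow, hcol⟩ := hbis
  obtain ⟨s, rfl⟩ : ∃ s, t = s + 1 := ⟨t - 1, by omega⟩
  rw [half_sum_abs_sub_eq_sum_max_sub _ _
    ((sum_annealedLaw hrow ht).trans (sum_starLaw hrow ht).symm)]
  calc ∑ w, max (starLaw (s + 1) ht P x w - annealedLaw (s + 1) ht P x w) 0
      ≤ ∑ w, (collisionCount (fun k => (w k).1) + collisionCount (fun k => (w k).2)) *
          starLaw (s + 1) ht P x w :=
        sum_le_sum fun w _ => max_sub_le_collisionCount_mul_starLaw hP ht w
    _ = 2 * #(increasingPairs (s + 1)) / n := by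
        simp only [add_mul, sum_add_distrib, starLaw_eq_prod]
        rw [sum_collisionCount_mul_prod _ (sum_starWeight hrow) Prod.fst _
            fun k hk => sum_ite_fst_eq_mul_starWeight hrow hk,
          sum_collisionCount_mul_prod _ (sum_starWeight hrow) Prod.snd _
            fun k hk => sum_ite_snd_eq_mul_starWeight hcol hk]
        ring
    _ ≤ 2 * ((s + 1 : ℕ) : ℝ) ^ 2 / n := by
        gcongr
        exact_mod_cast card_increasingPairs_le _

end
end

section
/- Let $P$ be a bistochastic matrix on a finite state space $\Omega$ of size $n$ with minimal positive entry $\delta$ and laziness $\gamma > 0$ (i.e. $P(x,x) \ge \gamma$ for all $x$), let $\pi$ be a permutation of $\Omega$, and let $Q = P\Pi$. Then for every nonempty $S \subseteq \Omega$, $\varphi_S \ge \frac{\gamma^2\delta^2}{2|S|}\Big( \big|\pi^{-1}(\mathcal{E}(\pi(\mathcal{E}(S)))) \setminus S\big| + \big|\pi^{-1}(\mathcal{E}(\pi(\mathcal{E}(S^c)))) \setminus S^c\big| \Big)$, where $\varphi_S = \frac{1}{2|S|}\sum_{y\in\Omega} \min\big\{ \sum_{x\in S} Q^2(x,y),\ \sum_{x\in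 S^c} Q^2(x,y) \big\}$. -/
/-!
Write `Q = P Π`, so `Q (x, y) = P (x, π⁻¹ y)`. If `y ∈ π⁻¹(ℰ(π(ℰ(S)))) \ S`, then `Q²` reaches
`π (π y)` from some `x ∈ S` through two positive entries of `P`, carrying mass at least `δ²`,
and from `y ∉ S` along the lazy path `y → π y → π (π y)`, carrying mass at least `γ²`.
So the minimum in `φ_S` at `π (π y)` is at least `γ²δ²`, and likewise with `S` and `Sᶜ`
exchanged. The two exceptional sets are disjoint (one lies in `Sᶜ`, the other in `S`) and
`y ↦ π (π y)` is injective, so summing over them gives the bound.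
-/

open Finset Filter

noncomputable section

/-- The evolving-set quantity `φ_S` for the two-step chain `Q²`. -/
def phiSq {n : ℕ} (Q : Matrix (Fin n) (Fin n) ℝ) (S : Finset (Fin n)) : ℝ :=
  (1 / (2 * (S.card : ℝ))) *
    ∑ y, min (∑ x ∈ S, (Q ^ 2) x y) (∑ x ∈ Sᶜ, (Q ^ 2) x y)

open Classical in
/-- The set of states attainable by `P` in one step starting from `A`. -/
def attain {n : ℕ} (P : Matrix (Fin n) (Fin n) ℝ) (A : Finset (Fin n)) : Finset (Fin n) :=
  Finset.univ.filter fun y => ∃ x ∈ A, 0 < P x y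

theorem Matrix.mul_apply_le_of_nonneg {ι : Type*} [Fintype ι] {A B : Matrix ι ι ℝ}
    (hA : ∀ i j, 0 ≤ A i j) (hB : ∀ i j, 0 ≤ B i j) (i k j : ι) :
    A i k * B k j ≤ (A * B) i j :=
  Finset.single_le_sum (f := fun l => A i l * B l j)
    (fun l _ => mul_nonneg (hA i l) (hB l j)) (Finset.mem_univ k)

theorem Matrix.mul_apply_nonneg {ι : Type*} [Fintype ι] {A B : Matrix ι ι ℝ}
    (hA : ∀ i j, 0 ≤ A i j) (hB : ∀ i j, 0 ≤ B i j) (i j : ι) : 0 ≤ (A * B) i j :=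
  Finset.sum_nonneg fun k _ => mul_nonneg (hA i k) (hB k j)

theorem Finset.card_mul_le_sum_of_le_comp {ι κ : Type*} [Fintype κ] {T : Finset ι}
    {g : ι → κ} (hg : Function.Injective g) {f : κ → ℝ} (hf : ∀ z, 0 ≤ f z) {c : ℝ}
    (hc : ∀ y ∈ T, c ≤ f (g y)) :
    T.card * c ≤ ∑ z, f z :=
  calc T.card * c ≤ ∑ y ∈ T, f (g y) := by
        simpa only [nsmul_eq_mul] using Finset.card_nsmul_le_sum T _ c hc
    _ = ∑ z ∈ T.map ⟨g, hg⟩, f z := (Finset.sum_map T ⟨g, hg⟩ f).symm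
    _ ≤ ∑ z, f z :=
        Finset.sum_le_sum_of_subset_of_nonneg (Finset.subset_univ _) fun z _ _ => hf z

section

variable {n : ℕ} {P : Matrix (Fin n) (Fin n) ℝ}

theorem Bistochastic.apply_le_one (hP : Bistochastic P) (x y : Fin n) : P x y ≤ 1 :=
  calc P x y ≤ ∑ z, P x z := Finset.single_le_sum (fun z _ => hP.1 x z) (Finset.mem_univ y)
    _ = 1 := hP.2.1 x

theorem minPosEntry_le {x y : Fin n} (h : 0 < P x y) : minPosEntry P ≤ P x y :=
  csInf_le ⟨0, fun _ hr => hr.1.le⟩ ⟨h, x, y, rfl⟩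

theorem minPosEntry_pos {x y : Fin n} (h : 0 < P x y) : 0 < minPosEntry P := by
  have hfin : {r : ℝ | 0 < r ∧ ∃ x y, P x y = r}.Finite :=
    (Set.finite_range fun p : Fin n × Fin n => P p.1 p.2).subset
      fun _ ⟨_, x, y, hxy⟩ => ⟨(x, y), hxy⟩
  have hne : {r : ℝ | 0 < r ∧ ∃ x y, P x y = r}.Nonempty := ⟨P x y, h, x, y, rfl⟩
  exact (hne.csInf_mem hfin).1

theorem mul_permMatrix_apply (π : Equiv.Perm (Fin n)) (x y : Fin n) :
    (P * permMatrix π) x y = P x (π.symm y) := by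
  simp [Matrix.mul_apply, permMatrix, ← Equiv.symm_apply_eq]

end

/-- `π⁻¹(ℰ(π(ℰ(A)))) \ A` in the paper's notation. -/
def escapeSet {n : ℕ} (P : Matrix (Fin n) (Fin n) ℝ) (π : Equiv.Perm (Fin n))
    (A : Finset (Fin n)) : Finset (Fin n) :=
  (attain P ((attain P A).image π)).image π.symm \ A

section

variable {n : ℕ} {P : Matrix (Fin n) (Fin n) ℝ} {π : Equiv.Perm (Fin n)}

theorem mem_escapeSet {A : Finset (Fin n)} {y : Fin n} :
    y ∈ escapeSet P π A ↔ (∃ x ∈ A, ∃ w, 0 < P x w ∧ 0 < P (π w) (π y)) ∧ y ∉ A := by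
  simp only [escapeSet, attain, Finset.mem_sdiff, Finset.mem_image, Finset.mem_filter,
    Finset.mem_univ, true_and, Equiv.symm_apply_eq]
  constructor
  · rintro ⟨⟨_, ⟨_, ⟨w, ⟨x, hxA, hxw⟩, rfl⟩, hwy⟩, rfl⟩, hyA⟩
    exact ⟨⟨x, hxA, w, hxw, hwy⟩, hyA⟩
  · rintro ⟨⟨x, hxA, w, hxw, hwy⟩, hyA⟩
    exact ⟨⟨π y, ⟨π w, ⟨w, ⟨x, hxA, hxw⟩, rfl⟩, hwy⟩, rfl⟩, hyA⟩

theorem escapeSet_subset_compl (A : Finset (Fin n)) : escapeSet P π A ⊆ Aᶜ :=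
  fun _ hy => Finset.mem_compl.2 (mem_escapeSet.1 hy).2

theorem disjoint_escapeSet_escapeSet_compl (S : Finset (Fin n)) :
    Disjoint (escapeSet P π S) (escapeSet P π Sᶜ) :=
  Finset.disjoint_left.2 fun _ hy hy' =>
    (mem_escapeSet.1 hy').2 (escapeSet_subset_compl S hy)

section

variable (hP : ∀ x y, 0 ≤ P x y)
include hP

theorem mul_permMatrix_nonneg (x y : Fin n) : 0 ≤ (P * permMatrix π) x y := by
  rw [mul_permMatrix_apply]
  exact hP _ _

theorem mul_le_sq_mul_permMatrix_apply (x w y : Fin n) :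
    P x w * P (π w) (π y) ≤ ((P * permMatrix π) ^ 2) x (π (π y)) := by
  have hQ := mul_permMatrix_nonneg (π := π) hP
  calc P x w * P (π w) (π y)
      = (P * permMatrix π) x (π w) * (P * permMatrix π) (π w) (π (π y)) := by
        simp only [mul_permMatrix_apply, Equiv.symm_apply_apply]
    _ ≤ ((P * permMatrix π) ^ 2) x (π (π y)) := by
        rw [sq]
        exact Matrix.mul_apply_le_of_nonneg hQ hQ _ _ _

theorem sq_mul_permMatrix_nonneg (x z : Fin n) : 0 ≤ ((P * permMatrix π) ^ 2) x z := by
  have hQ := mul_permMatrix_nonneg (π := π) hP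
  rw [sq]
  exact Matrix.mul_apply_nonneg hQ hQ x z

theorem sq_mul_permMatrix_apply_le_sum {A : Finset (Fin n)} {x : Fin n} (hx : x ∈ A)
    (z : Fin n) : ((P * permMatrix π) ^ 2) x z ≤ ∑ x' ∈ A, ((P * permMatrix π) ^ 2) x' z :=
  Finset.single_le_sum (f := fun x' => ((P * permMatrix π) ^ 2) x' z)
    (fun x' _ => sq_mul_permMatrix_nonneg hP x' z) hx

theorem sq_minPosEntry_le_sum_sq_mul_permMatrix_apply {A : Finset (Fin n)} {y : Fin n}
    (hy : y ∈ escapeSet P π A) :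
    minPosEntry P ^ 2 ≤ ∑ x ∈ A, ((P * permMatrix π) ^ 2) x (π (π y)) := by
  obtain ⟨⟨x, hxA, w, hxw, hwy⟩, -⟩ := mem_escapeSet.1 hy
  calc minPosEntry P ^ 2 ≤ P x w * P (π w) (π y) := by
        rw [sq]
        exact mul_le_mul (minPosEntry_le hxw) (minPosEntry_le hwy)
          (minPosEntry_pos hxw).le hxw.le
    _ ≤ ((P * permMatrix π) ^ 2) x (π (π y)) := mul_le_sq_mul_permMatrix_apply hP x w y
    _ ≤ _ := sq_mul_permMatrix_apply_le_sum hP hxA _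

theorem sq_le_sum_compl_sq_mul_permMatrix_apply {γ : ℝ} (hγ : 0 ≤ γ) (hlazy : ∀ x, γ ≤ P x x)
    {A : Finset (Fin n)} {y : Fin n} (hy : y ∉ A) :
    γ ^ 2 ≤ ∑ x ∈ Aᶜ, ((P * permMatrix π) ^ 2) x (π (π y)) :=
  calc γ ^ 2 ≤ P y y * P (π y) (π y) := by
        rw [sq]
        exact mul_le_mul (hlazy y) (hlazy (π y)) hγ (hγ.trans (hlazy y))
    _ ≤ ((P * permMatrix π) ^ 2) y (π (π y)) := mul_le_sq_mul_permMatrix_apply hP y y y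
    _ ≤ _ := sq_mul_permMatrix_apply_le_sum hP (Finset.mem_compl.2 hy) _

end

theorem mul_sq_le_min_sum_sq_mul_permMatrix_apply (hP : Bistochastic P) {γ : ℝ} (hγ : 0 < γ)
    (hlazy : ∀ x, γ ≤ P x x) {S : Finset (Fin n)} {y : Fin n}
    (hy : y ∈ escapeSet P π S ∪ escapeSet P π Sᶜ) :
    γ ^ 2 * minPosEntry P ^ 2 ≤ min (∑ x ∈ S, ((P * permMatrix π) ^ 2) x (π (π y)))
      (∑ x ∈ Sᶜ, ((P * permMatrix π) ^ 2) x (π (π y))) := by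
  have hPyy : 0 < P y y := hγ.trans_le (hlazy y)
  have hγ1 : γ ≤ 1 := (hlazy y).trans (hP.apply_le_one y y)
  have hδ0 : 0 ≤ minPosEntry P := (minPosEntry_pos hPyy).le
  have hδ1 : minPosEntry P ≤ 1 := (minPosEntry_le hPyy).trans (hP.apply_le_one y y)
  have hmul_le {a b : ℝ} (ha : minPosEntry P ^ 2 ≤ a) (hb : γ ^ 2 ≤ b) :
      γ ^ 2 * minPosEntry P ^ 2 ≤ a ∧ γ ^ 2 * minPosEntry P ^ 2 ≤ b := by
    have : γ ^ 2 ≤ 1 := pow_le_one₀ hγ.le hγ1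
    have : minPosEntry P ^ 2 ≤ 1 := pow_le_one₀ hδ0 hδ1
    constructor <;> nlinarith [sq_nonneg γ, sq_nonneg (minPosEntry P)]
  rcases Finset.mem_union.1 hy with hyS | hyS
  · exact le_min_iff.2 <| hmul_le (sq_minPosEntry_le_sum_sq_mul_permMatrix_apply hP.1 hyS)
      (sq_le_sum_compl_sq_mul_permMatrix_apply (π := π) hP.1 hγ.le hlazy (mem_escapeSet.1 hyS).2)
  · have := hmul_le (sq_minPosEntry_le_sum_sq_mul_permMatrix_apply hP.1 hyS)
      (sq_le_sum_compl_sq_mul_permMatrix_apply (π := π) hP.1 hγ.le hlazy (mem_escapeSet.1 hyS).2)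
    rw [compl_compl] at this
    exact le_min_iff.2 this.symm

end

/-- under laziness `γ`, for every nonempty `S`,
`φ_S ≥ (γ²δ²/(2|S|)) (|π⁻¹(ℰ(π(ℰ(S)))) \ S| + |π⁻¹(ℰ(π(ℰ(Sᶜ)))) \ Sᶜ|)`. -/
theorem phiS_lower_bound
    (n : ℕ) (P : Matrix (Fin n) (Fin n) ℝ) (hbis : Bistochastic P)
    (γ : ℝ) (hγ : 0 < γ) (hlazy : ∀ x, γ ≤ P x x)
    (π : Equiv.Perm (Fin n)) :
    ∀ S : Finset (Fin n), S.Nonempty →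
      γ ^ 2 * (minPosEntry P) ^ 2 / (2 * (S.card : ℝ)) *
          ((((attain P ((attain P S).image π)).image π.symm \ S).card : ℝ) +
            (((attain P ((attain P Sᶜ).image π)).image π.symm \ Sᶜ).card : ℝ)) ≤
        phiSq (P * permMatrix π) S := by
  intro S _
  have hsum := Finset.card_mul_le_sum_of_le_comp (T := escapeSet P π S ∪ escapeSet P π Sᶜ)
    (π.injective.comp π.injective)
    (f := fun z => min (∑ x ∈ S, ((P * permMatrix π) ^ 2) x z)
      (∑ x ∈ Sᶜ, ((P * permMatrix π) ^ 2) x z))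
    (fun z => le_min (Finset.sum_nonneg fun x _ => sq_mul_permMatrix_nonneg hbis.1 x z)
      (Finset.sum_nonneg fun x _ => sq_mul_permMatrix_nonneg hbis.1 x z))
    fun _ hy => mul_sq_le_min_sum_sq_mul_permMatrix_apply hbis hγ hlazy hy
  rw [Finset.card_union_of_disjoint (disjoint_escapeSet_escapeSet_compl S), Nat.cast_add] at hsum
  rw [phiSq, div_mul_eq_mul_div, one_div_mul_eq_div, mul_comm]
  exact div_le_div_of_nonneg_right hsum (by positivity)

end
end

section
/- Let $P$ be a bistochastic matrix on a finite state space $\Omega$ of size $n$ with laziness $\gamma > 0$ (i.e. $P(x,x) \ge \gamma$ for all $x$), let $\pi$ be a permutation of $\Omega$, and let $Q = P\Pi$. Then for every $S \subseteq \Omega$, $\sum_{y \in \pi(\pi(S))} \min\Big\{ \sum_{x\in S} Q^2(x,y),\ \sum_{x\in S^c} Q^2(x,y) \Big\} \ \ge\ \gamma^2 \sum_{x\in S^c} Q^2\big(x, \pi(\pi(S))\big)$, where $Q^2(x, A) = \sum_{y \in A} Q^2(x,y)$. -/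
open Finset Filter

noncomputable section

/-!
Fix a column `y = π (π s)` with `s ∈ S`. Since `Q = P Π` satisfies `Q x (π x) = P x x`, the
path `s → π s → π (π s)` consists of two lazy steps, so `Q²(S, y) ≥ Q²(s, y) ≥ γ²`. On the other
hand `Q²` is doubly stochastic, so `Q²(Sᶜ, y) ≤ 1` and `γ² ≤ 1`. Hence `γ² Q²(Sᶜ, y)` is at most
both `Q²(S, y)` and `Q²(Sᶜ, y)`; summing over `y ∈ π (π S)` gives the claim.
-/

open Matrix

lemma bistochastic_iff_mem_doublyStochastic {n : ℕ} {P : Matrix (Fin n) (Fin n) ℝ} :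
    Bistochastic P ↔ P ∈ doublyStochastic ℝ (Fin n) :=
  mem_doublyStochastic_iff_sum.symm

lemma permMatrix_eq_perm_permMatrix {n : ℕ} (π : Equiv.Perm (Fin n)) :
    permMatrix π = π.permMatrix ℝ := by
  ext x y
  simp [permMatrix, eq_comm]

lemma mul_permMatrix_mem_doublyStochastic {n : ℕ} {P : Matrix (Fin n) (Fin n) ℝ}
    (hP : P ∈ doublyStochastic ℝ (Fin n)) (π : Equiv.Perm (Fin n)) :
    P * permMatrix π ∈ doublyStochastic ℝ (Fin n) := by
  rw [permMatrix_eq_perm_permMatrix]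
  exact mul_mem hP permMatrix_mem_doublyStochastic

lemma mul_permMatrix_apply_self {n : ℕ} (P : Matrix (Fin n) (Fin n) ℝ)
    (π : Equiv.Perm (Fin n)) (x : Fin n) : (P * permMatrix π) x (π x) = P x x := by
  simp [permMatrix_eq_perm_permMatrix, PEquiv.mul_toMatrix_toPEquiv]

namespace Matrix

variable {ι R : Type*} [Fintype ι] [Semiring R] [PartialOrder R] [IsOrderedRing R]

lemma apply_mul_apply_le_mul_apply {M N : Matrix ι ι R} (hM : ∀ i j, 0 ≤ M i j)
    (hN : ∀ i j, 0 ≤ N i j) (a b c : ι) : M a b * N b c ≤ (M * N) a c :=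
  single_le_sum (f := fun k => M a k * N k c) (fun k _ => mul_nonneg (hM a k) (hN k c))
    (mem_univ b)

lemma sum_col_le_one_of_mem_doublyStochastic [DecidableEq ι] {M : Matrix ι ι R}
    (hM : M ∈ doublyStochastic R ι) (s : Finset ι) (j : ι) : ∑ i ∈ s, M i j ≤ 1 :=
  sum_col_of_mem_doublyStochastic hM j ▸
    sum_le_sum_of_subset_of_nonneg (subset_univ s) fun _ _ _ => hM.1 _ _

end Matrix

lemma sq_le_sum_sq_mul_permMatrix_apply {n : ℕ} {P : Matrix (Fin n) (Fin n) ℝ}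
    (hP : P ∈ doublyStochastic ℝ (Fin n)) {γ : ℝ} (hγ : 0 ≤ γ) (hlazy : ∀ x, γ ≤ P x x)
    (π : Equiv.Perm (Fin n)) {S : Finset (Fin n)} {s : Fin n} (hs : s ∈ S) :
    γ ^ 2 ≤ ∑ x ∈ S, ((P * permMatrix π) ^ 2) x (π (π s)) := by
  have hQ := mul_permMatrix_mem_doublyStochastic hP π
  calc γ ^ 2 = γ * γ := sq γ
    _ ≤ (P * permMatrix π) s (π s) * (P * permMatrix π) (π s) (π (π s)) := by
      rw [mul_permMatrix_apply_self, mul_permMatrix_apply_self]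
      exact mul_le_mul (hlazy s) (hlazy (π s)) hγ (hP.1 _ _)
    _ ≤ ((P * permMatrix π) ^ 2) s (π (π s)) := by
      rw [sq]
      exact apply_mul_apply_le_mul_apply hQ.1 hQ.1 _ _ _
    _ ≤ ∑ x ∈ S, ((P * permMatrix π) ^ 2) x (π (π s)) :=
      single_le_sum (fun x _ => (pow_mem hQ 2).1 x _) hs

/-- under laziness `γ`, for every `S ⊆ Ω`,
`∑_{y ∈ π(π(S))} min(∑_{x∈S} Q²(x,y), ∑_{x∈Sᶜ} Q²(x,y)) ≥ γ² Q²(Sᶜ, π(π(S)))`. -/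
theorem min_sum_ge_gamma_sq
    (n : ℕ) (P : Matrix (Fin n) (Fin n) ℝ) (hbis : Bistochastic P)
    (γ : ℝ) (hγ : 0 < γ) (hlazy : ∀ x, γ ≤ P x x)
    (π : Equiv.Perm (Fin n)) (S : Finset (Fin n)) :
    γ ^ 2 * ∑ x ∈ Sᶜ, ∑ y ∈ (S.image π).image π,
        ((P * permMatrix π) ^ 2) x y ≤
      ∑ y ∈ (S.image π).image π,
        min (∑ x ∈ S, ((P * permMatrix π) ^ 2) x y)
          (∑ x ∈ Sᶜ, ((P * permMatrix π) ^ 2) x y) := by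
  rw [bistochastic_iff_mem_doublyStochastic] at hbis
  have hQ2 := pow_mem (mul_permMatrix_mem_doublyStochastic hbis π) 2
  rw [Finset.sum_comm (f := fun x y => ((P * permMatrix π) ^ 2) x y), mul_sum]
  refine sum_le_sum fun y hy => ?_
  obtain ⟨s, hs, rfl⟩ : ∃ s ∈ S, π (π s) = y := by simpa using hy
  have hγ1 : γ ^ 2 ≤ 1 :=
    pow_le_one₀ hγ.le ((hlazy s).trans (le_one_of_mem_doublyStochastic hbis))
  have hS := sq_le_sum_sq_mul_permMatrix_apply hbis hγ.le hlazy π hs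
  have hSc := sum_col_le_one_of_mem_doublyStochastic hQ2 Sᶜ (π (π s))
  exact le_min ((mul_le_of_le_one_right (sq_nonneg γ) hSc).trans hS)
    (mul_le_of_le_one_left (sum_nonneg fun x _ => hQ2.1 x _) hγ1)

end
end
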